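/- arXiv:1803.03923 — 3 statements merged into one kernel-verified Lean document; each statement's English description precedes it below -/
import Mathlib

section
/- Let A = ℤ[a₁,a₂,b₁,b₂]/⟨a₁²+a₂², a₁²a₂², b₁²+b₂², b₁²b₂²⟩ and let μ : A → ℤ[c₁,c₂]/⟨c₁²+c₂², c₁²c₂²⟩ be the ring homomorphism induced by aᵢ ↦ cᵢ and bᵢ ↦ cᵢ for i = 1,2. Then the kernel of μ is the ideal of A generated by the classes of a₁ − b₁ and a₂ − b₂. -/
open MvPolynomial

private lemma key_diff (p : MvPolynomial (Fin 4) ℤ) :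
    p - rename (![0, 1, 0, 1] : Fin 4 → Fin 4) p ∈
      Ideal.span ({X 0 - X 2, X 1 - X 3} : Set (MvPolynomial (Fin 4) ℤ)) := by
  set g : Fin 4 → Fin 4 := ![0, 1, 0, 1] with hg
  have h0 : g 0 = 0 := rfl
  have h1 : g 1 = 1 := rfl
  have h2 : g 2 = 0 := rfl
  have h3 : g 3 = 1 := rfl
  have hX : ∀ i : Fin 4, X i - X (g i) ∈
      Ideal.span ({X 0 - X 2, X 1 - X 3} : Set (MvPolynomial (Fin 4) ℤ)) := by
    intro i
    fin_cases i
    · show (X 0 - X (g 0) : MvPolynomial (Fin 4) ℤ) ∈ _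
      rw [h0, sub_self]; exact zero_mem _
    · show (X 1 - X (g 1) : MvPolynomial (Fin 4) ℤ) ∈ _
      rw [h1, sub_self]; exact zero_mem _
    · show (X 2 - X (g 2) : MvPolynomial (Fin 4) ℤ) ∈ _
      rw [h2]
      have : (X 2 - X 0 : MvPolynomial (Fin 4) ℤ) = -(X 0 - X 2) := by ring
      rw [this]
      exact neg_mem (Ideal.subset_span (by simp))
    · show (X 3 - X (g 3) : MvPolynomial (Fin 4) ℤ) ∈ _
      rw [h3]
      have : (X 3 - X 1 : MvPolynomial (Fin 4) ℤ) = -(X 1 - X 3) := by ring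
      rw [this]
      exact neg_mem (Ideal.subset_span (by simp))
  induction p using MvPolynomial.induction_on with
  | C a => simp
  | add p q hp hq =>
      rw [map_add]
      have := Ideal.add_mem _ hp hq
      convert this using 1; ring
  | mul_X p i hp =>
      rw [map_mul, rename_X]
      have h1 : p * X i - rename g p * X (g i) =
          (p - rename g p) * X i + rename g p * (X i - X (g i)) := by ring
      rw [h1]
      exact add_mem (Ideal.mul_mem_right _ _ hp) (Ideal.mul_mem_left _ _ (hX i))

/-- Let `A = ℤ[a₁,a₂,b₁,b₂]/⟨a₁²+a₂², a₁²a₂², b₁²+b₂², b₁²b₂²⟩`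
(variables `a₁,a₂,b₁,b₂` are `X 0, X 1, X 2, X 3`) and let
`μ : A → ℤ[c₁,c₂]/⟨c₁²+c₂², c₁²c₂²⟩` be the ring homomorphism induced by
`aᵢ ↦ cᵢ`, `bᵢ ↦ cᵢ`.  Then `ker μ` is the ideal generated by the classes of
`a₁ − b₁` and `a₂ − b₂`. -/
theorem ker_diagonal_model_Sp2
    (I : Ideal (MvPolynomial (Fin 4) ℤ))
    (hI : I = Ideal.span {X 0 ^ 2 + X 1 ^ 2,
                          X 0 ^ 2 * X 1 ^ 2,
                          X 2 ^ 2 + X 3 ^ 2,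
                          X 2 ^ 2 * X 3 ^ 2})
    (J : Ideal (MvPolynomial (Fin 2) ℤ))
    (hJ : J = Ideal.span {X 0 ^ 2 + X 1 ^ 2,
                          X 0 ^ 2 * X 1 ^ 2})
    (μ : (MvPolynomial (Fin 4) ℤ ⧸ I) →+* (MvPolynomial (Fin 2) ℤ ⧸ J))
    (hμ : ∀ p : MvPolynomial (Fin 4) ℤ,
      μ (Ideal.Quotient.mk I p) =
        Ideal.Quotient.mk J (rename ![(0 : Fin 2), 1, 0, 1] p)) :
    RingHom.ker μ =
      Ideal.span {Ideal.Quotient.mk I (X 0 - X 2), Ideal.Quotient.mk I (X 1 - X 3)} := by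
  set f : Fin 4 → Fin 2 := ![0, 1, 0, 1] with hf
  set emb : Fin 2 → Fin 4 := ![0, 1] with hemb
  apply le_antisymm
  · -- ker μ ≤ span
    intro x hx
    obtain ⟨p, rfl⟩ := Ideal.Quotient.mk_surjective x
    have hx' : Ideal.Quotient.mk J (rename f p) = 0 := by
      rw [← hμ p]; exact hx
    have hpJ : rename f p ∈ J := (Ideal.Quotient.eq_zero_iff_mem).mp hx'
    have hJI : ∀ q ∈ J, rename emb q ∈ I := by
      intro q hq
      rw [hJ] at hq
      have hle : Ideal.map (rename emb : MvPolynomial (Fin 2) ℤ →ₐ[ℤ] MvPolynomial (Fin 4) ℤ).toRingHom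
          (Ideal.span {X 0 ^ 2 + X 1 ^ 2, X 0 ^ 2 * X 1 ^ 2}) ≤ I := by
        rw [Ideal.map_span]
        apply Ideal.span_le.mpr
        rintro r ⟨s, hs, rfl⟩
        rcases hs with rfl | rfl
        · rw [hI]
          apply Ideal.subset_span
          have he0 : emb 0 = 0 := rfl
          have he1 : emb 1 = 1 := rfl
          simp [map_add, map_pow, rename_X, he0, he1]
        · rw [hI]
          apply Ideal.subset_span
          have he0 : emb 0 = 0 := rfl
          have he1 : emb 1 = 1 := rfl
          simp [map_mul, map_pow, rename_X, he0, he1]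
      exact hle (Ideal.mem_map_of_mem _ hq)
    have hfe : (emb ∘ f) = (![0, 1, 0, 1] : Fin 4 → Fin 4) := by
      funext i; fin_cases i <;> rfl
    have hgcomp : rename (![0, 1, 0, 1] : Fin 4 → Fin 4) p = rename emb (rename f p) := by
      rw [rename_rename, hfe]
    have h0 : Ideal.Quotient.mk I (rename (![0, 1, 0, 1] : Fin 4 → Fin 4) p) = 0 := by
      rw [hgcomp, Ideal.Quotient.eq_zero_iff_mem]
      exact hJI _ hpJ
    have hdiff := key_diff p
    have heq : Ideal.Quotient.mk I p =
        Ideal.Quotient.mk I (p - rename (![0, 1, 0, 1] : Fin 4 → Fin 4) p) := by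
      rw [map_sub, h0, sub_zero]
    rw [heq]
    have hmap : Ideal.Quotient.mk I (p - rename (![0, 1, 0, 1] : Fin 4 → Fin 4) p) ∈
        Ideal.map (Ideal.Quotient.mk I)
          (Ideal.span ({X 0 - X 2, X 1 - X 3} : Set (MvPolynomial (Fin 4) ℤ))) :=
      Ideal.mem_map_of_mem _ hdiff
    rwa [Ideal.map_span, Set.image_insert_eq, Set.image_singleton] at hmap
  · -- span ≤ ker μ
    apply Ideal.span_le.mpr
    have hf02 : f 0 = f 2 := rfl
    have hf13 : f 1 = f 3 := rfl
    rintro x (rfl | rfl)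
    · have hz : μ (Ideal.Quotient.mk I (X 0 - X 2)) = 0 := by
        rw [hμ, map_sub, rename_X, rename_X, hf02, sub_self, map_zero]
      exact RingHom.mem_ker.mpr hz
    · have hz : μ (Ideal.Quotient.mk I (X 1 - X 3)) = 0 := by
        rw [hμ, map_sub, rename_X, rename_X, hf13, sub_self, map_zero]
      exact RingHom.mem_ker.mpr hz
end

section
/- Let A = ℤ[a₁,a₂,l,b₁,b₂,s]/⟨a₁²+a₁a₂+a₂², a₁²a₂+a₁a₂²−2l, l², b₁²+b₁b₂+b₂², b₁²b₂+b₁b₂²−2s, s²⟩ and let μ : A → ℤ[c₁,c₂,t]/⟨c₁²+c₁c₂+c₂², c₁²c₂+c₁c₂²−2t, t²⟩ be the ring homomorphism induced by aᵢ ↦ cᵢ, bᵢ ↦ cᵢ for i = 1,2 and l ↦ t, s ↦ t. Then the kernel of μ is the ideal of A generated by the classes of a₁ − b₁, a₂ − b₂ and l − s. -/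
open MvPolynomial

namespace G2Aux

noncomputable def f6 : MvPolynomial (Fin 6) ℤ →+* MvPolynomial (Fin 3) ℤ :=
  (rename (R := ℤ) ![(0 : Fin 3), 1, 2, 0, 1, 2]).toRingHom

noncomputable def h3 : MvPolynomial (Fin 3) ℤ →+* MvPolynomial (Fin 6) ℤ :=
  (rename (R := ℤ) ![(0 : Fin 6), 1, 2]).toRingHom

noncomputable def D6 : Ideal (MvPolynomial (Fin 6) ℤ) :=
  Ideal.span {X 0 - X 3, X 1 - X 4, X 2 - X 5}

lemma fh (q : MvPolynomial (Fin 3) ℤ) : f6 (h3 q) = q := by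
  show (rename _) ((rename _) q) = q
  rw [rename_rename]
  have : (![(0 : Fin 3), 1, 2, 0, 1, 2] ∘ ![(0 : Fin 6), 1, 2]) = id := by
    funext i; fin_cases i <;> rfl
  rw [this, rename_id, AlgHom.id_apply]

lemma sub_mem (p : MvPolynomial (Fin 6) ℤ) : p - h3 (f6 p) ∈ D6 := by
  induction p using MvPolynomial.induction_on with
  | C a =>
      have : (h3 (f6 (C a)) : MvPolynomial (Fin 6) ℤ) = C a := by
        show (rename _) ((rename _) (C a)) = _
        simp
      rw [this, sub_self]; exact zero_mem _
  | add p q hp hq =>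
      have : p + q - h3 (f6 (p + q)) = (p - h3 (f6 p)) + (q - h3 (f6 q)) := by
        simp only [map_add]; ring
      rw [this]; exact add_mem hp hq
  | mul_X p n hp =>
      have key : X n - h3 (f6 (X n)) ∈ D6 := by
        have hx : ∀ m : Fin 6, h3 (f6 (X m)) =
            X (![(0 : Fin 6), 1, 2] (![(0 : Fin 3), 1, 2, 0, 1, 2] m)) := by
          intro m
          show (rename _) ((rename _) (X m)) = _
          rw [rename_X, rename_X]
        rw [hx]
        fin_cases n
        · simp
        · simp
        · simp
        · show (X 3 - X (![(0:Fin 6),1,2] 0) : MvPolynomial (Fin 6) ℤ) ∈ D6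
          have : (X 3 - X (![(0:Fin 6),1,2] 0) : MvPolynomial (Fin 6) ℤ) = -(X 0 - X 3) := by
            show (X 3 - X 0 : MvPolynomial (Fin 6) ℤ) = _; ring
          rw [this]; exact neg_mem (Ideal.subset_span (by simp))
        · show (X 4 - X (![(0:Fin 6),1,2] 1) : MvPolynomial (Fin 6) ℤ) ∈ D6
          have : (X 4 - X (![(0:Fin 6),1,2] 1) : MvPolynomial (Fin 6) ℤ) = -(X 1 - X 4) := by
            show (X 4 - X 1 : MvPolynomial (Fin 6) ℤ) = _; ring
          rw [this]; exact neg_mem (Ideal.subset_span (by simp))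
        · show (X 5 - X (![(0:Fin 6),1,2] 2) : MvPolynomial (Fin 6) ℤ) ∈ D6
          have : (X 5 - X (![(0:Fin 6),1,2] 2) : MvPolynomial (Fin 6) ℤ) = -(X 2 - X 5) := by
            show (X 5 - X 2 : MvPolynomial (Fin 6) ℤ) = _; ring
          rw [this]; exact neg_mem (Ideal.subset_span (by simp))
      have : p * X n - h3 (f6 (p * X n)) =
          p * (X n - h3 (f6 (X n))) + (p - h3 (f6 p)) * h3 (f6 (X n)) := by
        simp only [map_mul]; ring
      rw [this]
      exact add_mem (Ideal.mul_mem_left _ _ key) (Ideal.mul_mem_right _ _ hp)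

lemma ker_f6_le : RingHom.ker f6 ≤ D6 := by
  intro p hp
  have := sub_mem p
  rwa [RingHom.mem_ker.mp hp, map_zero, sub_zero] at this

lemma f6_surj : Function.Surjective f6 := fun q => ⟨h3 q, fh q⟩

lemma g3 : (![0,1,2,0,1,2] : Fin 6 → Fin 3) 3 = 0 := rfl
lemma g4 : (![0,1,2,0,1,2] : Fin 6 → Fin 3) 4 = 1 := rfl
lemma g5 : (![0,1,2,0,1,2] : Fin 6 → Fin 3) 5 = 2 := rfl

lemma f6_gen1 : f6 (X 0 ^ 2 + X 0 * X 1 + X 1 ^ 2) = X 0 ^ 2 + X 0 * X 1 + X 1 ^ 2 := by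
  show (rename _) _ = _; simp [map_ofNat, g3, g4, g5]

lemma f6_gen2 : f6 (X 0 ^ 2 * X 1 + X 0 * X 1 ^ 2 - 2 * X 2)
    = X 0 ^ 2 * X 1 + X 0 * X 1 ^ 2 - 2 * X 2 := by
  show (rename _) _ = _; simp [map_ofNat, g3, g4, g5]

lemma f6_gen3 : f6 (X 2 ^ 2) = X 2 ^ 2 := by
  show (rename _) _ = _; simp [map_ofNat, g3, g4, g5]

lemma f6_gen4 : f6 (X 3 ^ 2 + X 3 * X 4 + X 4 ^ 2) = X 0 ^ 2 + X 0 * X 1 + X 1 ^ 2 := by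
  show (rename _) _ = _; simp [map_ofNat, g3, g4, g5]

lemma f6_gen5 : f6 (X 3 ^ 2 * X 4 + X 3 * X 4 ^ 2 - 2 * X 5)
    = X 0 ^ 2 * X 1 + X 0 * X 1 ^ 2 - 2 * X 2 := by
  show (rename _) _ = _; simp [map_ofNat, g3, g4, g5]

lemma f6_gen6 : f6 (X 5 ^ 2) = X 2 ^ 2 := by
  show (rename _) _ = _; simp [map_ofNat, g3, g4, g5]

lemma f6_d1 : f6 (X 0 - X 3) = 0 := by
  show (rename _) _ = _; simp [g3]
lemma f6_d2 : f6 (X 1 - X 4) = 0 := by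
  show (rename _) _ = _; simp [g4]
lemma f6_d3 : f6 (X 2 - X 5) = 0 := by
  show (rename _) _ = _; simp [g5]

end G2Aux

/-- Let
`A = ℤ[a₁,a₂,l,b₁,b₂,s]/⟨a₁²+a₁a₂+a₂², a₁²a₂+a₁a₂²−2l, l², b₁²+b₁b₂+b₂², b₁²b₂+b₁b₂²−2s, s²⟩`
(variables `a₁,a₂,l,b₁,b₂,s` are `X 0, …, X 5`) and let
`μ : A → ℤ[c₁,c₂,t]/⟨c₁²+c₁c₂+c₂², c₁²c₂+c₁c₂²−2t, t²⟩` be the ring homomorphism induced by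
`aᵢ ↦ cᵢ`, `bᵢ ↦ cᵢ`, `l ↦ t`, `s ↦ t`.  Then `ker μ` is the ideal generated by the
classes of `a₁ − b₁`, `a₂ − b₂` and `l − s`. -/
theorem ker_diagonal_model_G2
    (I : Ideal (MvPolynomial (Fin 6) ℤ))
    (hI : I = Ideal.span {X 0 ^ 2 + X 0 * X 1 + X 1 ^ 2,
                          X 0 ^ 2 * X 1 + X 0 * X 1 ^ 2 - 2 * X 2,
                          X 2 ^ 2,
                          X 3 ^ 2 + X 3 * X 4 + X 4 ^ 2,
                          X 3 ^ 2 * X 4 + X 3 * X 4 ^ 2 - 2 * X 5,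
                          X 5 ^ 2})
    (J : Ideal (MvPolynomial (Fin 3) ℤ))
    (hJ : J = Ideal.span {X 0 ^ 2 + X 0 * X 1 + X 1 ^ 2,
                          X 0 ^ 2 * X 1 + X 0 * X 1 ^ 2 - 2 * X 2,
                          X 2 ^ 2})
    (μ : (MvPolynomial (Fin 6) ℤ ⧸ I) →+* (MvPolynomial (Fin 3) ℤ ⧸ J))
    (hμ : ∀ p : MvPolynomial (Fin 6) ℤ,
      μ (Ideal.Quotient.mk I p) =
        Ideal.Quotient.mk J (rename ![(0 : Fin 3), 1, 2, 0, 1, 2] p)) :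
    RingHom.ker μ =
      Ideal.span {Ideal.Quotient.mk I (X 0 - X 3),
                  Ideal.Quotient.mk I (X 1 - X 4),
                  Ideal.Quotient.mk I (X 2 - X 5)} := by
  classical
  have hμ' : ∀ p : MvPolynomial (Fin 6) ℤ,
      μ (Ideal.Quotient.mk I p) = Ideal.Quotient.mk J (G2Aux.f6 p) := fun p => hμ p
  -- `map f6 (I ⊔ D6) = J`
  have hmap : Ideal.map G2Aux.f6 (I ⊔ G2Aux.D6) = J := by
    apply le_antisymm
    · rw [Ideal.map_le_iff_le_comap, sup_le_iff]
      constructor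
      · rw [hI, Ideal.span_le]
        intro q hq
        simp only [Set.mem_insert_iff, Set.mem_singleton_iff] at hq
        rcases hq with rfl | rfl | rfl | rfl | rfl | rfl
        · rw [SetLike.mem_coe, Ideal.mem_comap, G2Aux.f6_gen1, hJ]
          exact Ideal.subset_span (by simp)
        · rw [SetLike.mem_coe, Ideal.mem_comap, G2Aux.f6_gen2, hJ]
          exact Ideal.subset_span (by simp)
        · rw [SetLike.mem_coe, Ideal.mem_comap, G2Aux.f6_gen3, hJ]
          exact Ideal.subset_span (by simp)
        · rw [SetLike.mem_coe, Ideal.mem_comap, G2Aux.f6_gen4, hJ]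
          exact Ideal.subset_span (by simp)
        · rw [SetLike.mem_coe, Ideal.mem_comap, G2Aux.f6_gen5, hJ]
          exact Ideal.subset_span (by simp)
        · rw [SetLike.mem_coe, Ideal.mem_comap, G2Aux.f6_gen6, hJ]
          exact Ideal.subset_span (by simp)
      · rw [G2Aux.D6, Ideal.span_le]
        intro q hq
        simp only [Set.mem_insert_iff, Set.mem_singleton_iff] at hq
        rcases hq with rfl | rfl | rfl
        · rw [SetLike.mem_coe, Ideal.mem_comap, G2Aux.f6_d1]; exact zero_mem _
        · rw [SetLike.mem_coe, Ideal.mem_comap, G2Aux.f6_d2]; exact zero_mem _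
        · rw [SetLike.mem_coe, Ideal.mem_comap, G2Aux.f6_d3]; exact zero_mem _
    · rw [hJ, Ideal.span_le]
      intro q hq
      simp only [Set.mem_insert_iff, Set.mem_singleton_iff] at hq
      rcases hq with rfl | rfl | rfl
      · rw [SetLike.mem_coe, ← G2Aux.f6_gen1]
        exact Ideal.mem_map_of_mem _
          (Ideal.mem_sup_left (by rw [hI]; exact Ideal.subset_span (by simp)))
      · rw [SetLike.mem_coe, ← G2Aux.f6_gen2]
        exact Ideal.mem_map_of_mem _
          (Ideal.mem_sup_left (by rw [hI]; exact Ideal.subset_span (by simp)))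
      · rw [SetLike.mem_coe, ← G2Aux.f6_gen3]
        exact Ideal.mem_map_of_mem _
          (Ideal.mem_sup_left (by rw [hI]; exact Ideal.subset_span (by simp)))
  -- `comap f6 J = I ⊔ D6`
  have hcomap : Ideal.comap G2Aux.f6 J = I ⊔ G2Aux.D6 := by
    rw [← hmap, Ideal.comap_map_of_surjective G2Aux.f6 G2Aux.f6_surj]
    have hker : Ideal.comap G2Aux.f6 ⊥ ≤ I ⊔ G2Aux.D6 := by
      intro p hp
      exact Ideal.mem_sup_right (G2Aux.ker_f6_le (by simpa [RingHom.mem_ker] using hp))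
    exact sup_eq_left.mpr hker
  -- `ker μ = map (mk I) (I ⊔ D6)`
  have hker : RingHom.ker μ = Ideal.map (Ideal.Quotient.mk I) (I ⊔ G2Aux.D6) := by
    apply le_antisymm
    · intro x hx
      obtain ⟨p, rfl⟩ := Ideal.Quotient.mk_surjective x
      have h0 : Ideal.Quotient.mk J (G2Aux.f6 p) = 0 := by
        rw [← hμ' p]; exact RingHom.mem_ker.mp hx
      have hpJ : G2Aux.f6 p ∈ J := Ideal.Quotient.eq_zero_iff_mem.mp h0
      have : p ∈ I ⊔ G2Aux.D6 := by rw [← hcomap]; exact hpJ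
      exact Ideal.mem_map_of_mem _ this
    · rw [Ideal.map_le_iff_le_comap]
      intro p hp
      have hpJ : G2Aux.f6 p ∈ J := by
        have : p ∈ Ideal.comap G2Aux.f6 J := by rw [hcomap]; exact hp
        exact this
      simp only [Ideal.mem_comap, RingHom.mem_ker, hμ' p]
      exact Ideal.Quotient.eq_zero_iff_mem.mpr hpJ
  rw [hker, Ideal.map_sup, Ideal.map_quotient_self, bot_sup_eq, G2Aux.D6,
    Ideal.map_span]
  congr 1
  simp [Set.image_insert_eq]
end

section
/- In the polynomial ring ℤ[y₁,y₂,g₁,g₂], the following equality of ideals holds: ⟨2y₁y₂g₁, 2y₁y₂g₂⟩ ∩ ⟨g₁²+g₂², g₁⁴⟩ = ⟨2y₁y₂(g₁²+g₂²), 2y₁y₂g₁⁴⟩. -/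
open MvPolynomial

/-- In `ℤ[y₁,y₂,g₁,g₂]`, the variables. -/
noncomputable def y₁ : MvPolynomial (Fin 4) ℤ := X 0
noncomputable def y₂ : MvPolynomial (Fin 4) ℤ := X 1
noncomputable def g₁ : MvPolynomial (Fin 4) ℤ := X 2
noncomputable def g₂ : MvPolynomial (Fin 4) ℤ := X 3

namespace Sp2Aux

noncomputable abbrev Spi : MvPolynomial (Fin 2) ℤ →+* MvPolynomial (Fin 2) (ZMod 2) :=
  MvPolynomial.map (Int.castRingHom (ZMod 2))

noncomputable abbrev tau : MvPolynomial (Fin 2) (ZMod 2) →ₐ[ZMod 2] MvPolynomial (Fin 2) (ZMod 2) :=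
  aeval ![X 0, X 0 + X 1]

lemma two_T : (2 : MvPolynomial (Fin 2) (ZMod 2)) = 0 := by
  have h : (2 : MvPolynomial (Fin 2) (ZMod 2)) = C (2 : ZMod 2) := (map_ofNat C 2).symm
  rw [h, show (2 : ZMod 2) = 0 from rfl, map_zero]

lemma tau_X0 : tau (X 0) = X 0 := by simp
lemma tau_X1 : tau (X 1) = X 0 + X 1 := by simp

lemma tau_tau (f : MvPolynomial (Fin 2) (ZMod 2)) : tau (tau f) = f := by
  have h : tau.comp tau = AlgHom.id (ZMod 2) _ := by
    apply algHom_ext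
    intro i
    fin_cases i
    · simp
    · show tau (tau (X 1)) = X 1
      rw [tau_X1, map_add, tau_X0, tau_X1]
      linear_combination (X 0 : MvPolynomial (Fin 2) (ZMod 2)) * two_T
  calc tau (tau f) = (tau.comp tau) f := rfl
    _ = f := by rw [h]; rfl

lemma prime_X0 : Prime (X 0 : MvPolynomial (Fin 2) (ZMod 2)) := by
  rw [← MulEquiv.prime_iff ((finSuccEquiv (ZMod 2) 1).toRingEquiv.toMulEquiv)]
  have h : ((finSuccEquiv (ZMod 2) 1).toRingEquiv.toMulEquiv (X 0)) = Polynomial.X :=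
    finSuccEquiv_X_zero
  rw [h]
  exact Polynomial.prime_X

lemma prime_X1 : Prime (X 1 : MvPolynomial (Fin 2) (ZMod 2)) := by
  rw [← MulEquiv.prime_iff ((renameEquiv (ZMod 2) (Equiv.swap (0 : Fin 2) 1)).toRingEquiv.toMulEquiv)]
  have h : ((renameEquiv (ZMod 2) (Equiv.swap (0 : Fin 2) 1)).toRingEquiv.toMulEquiv (X 1))
      = X 0 := by
    show rename (Equiv.swap (0 : Fin 2) 1) (X 1) = X 0
    rw [rename_X, Equiv.swap_apply_right]
  rw [h]
  exact prime_X0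

lemma not_X1_dvd : ¬ (X 1 : MvPolynomial (Fin 2) (ZMod 2)) ∣ X 0 ^ 4 := by
  rintro ⟨c, hc⟩
  have h := congrArg (aeval ![(X 0 : MvPolynomial (Fin 2) (ZMod 2)), 0]) hc
  simp at h


lemma sq_add : (X 0 + X 1 : MvPolynomial (Fin 2) (ZMod 2)) ^ 2 = X 0 ^ 2 + X 1 ^ 2 := by
  linear_combination (X 0 * X 1 : MvPolynomial (Fin 2) (ZMod 2)) * two_T

lemma X0_add_X1_ne : (X 0 + X 1 : MvPolynomial (Fin 2) (ZMod 2)) ≠ 0 := by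
  intro h
  have h1 := congrArg tau h
  rw [map_zero, map_add, tau_X0, tau_X1] at h1
  have h2 : (X 1 : MvPolynomial (Fin 2) (ZMod 2)) = 0 := by
    linear_combination h1 - (X 0 : MvPolynomial (Fin 2) (ZMod 2)) * two_T
  exact X_ne_zero 1 h2

lemma ker_pi (f : MvPolynomial (Fin 2) ℤ) (hf : Spi f = 0) : ∃ g, f = 2 * g := by
  have h : (C 2 : MvPolynomial (Fin 2) ℤ) ∣ f := by
    rw [C_dvd_iff_dvd_coeff]
    intro i
    have h2 : ((f.coeff i : ℤ) : ZMod 2) = 0 := by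
      have h3 := congrArg (fun p => MvPolynomial.coeff i p) hf
      simpa [coeff_map] using h3
    exact_mod_cast (ZMod.intCast_zmod_eq_zero_iff_dvd _ 2).mp h2
  obtain ⟨g, hg⟩ := h
  exact ⟨g, by rw [hg, show (C 2 : MvPolynomial (Fin 2) ℤ) = 2 from map_ofNat _ 2]⟩

lemma lemA (c : MvPolynomial (Fin 2) ℤ)
    (h : 2 * c ∈ Ideal.span ({X 0 ^ 2 + X 1 ^ 2, X 0 ^ 4} : Set (MvPolynomial (Fin 2) ℤ))) :
    c ∈ Ideal.span ({X 0 ^ 2 + X 1 ^ 2, X 0 ^ 4} : Set (MvPolynomial (Fin 2) ℤ)) := by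
  rw [Ideal.mem_span_pair] at h ⊢
  obtain ⟨a, b, hab⟩ := h
  have h0 : Spi a * (X 0 ^ 2 + X 1 ^ 2) + Spi b * X 0 ^ 4 = 2 * Spi c := by
    have := congrArg Spi hab
    simpa using this
  have hpi : Spi a * (X 0 + X 1) ^ 2 + Spi b * X 0 ^ 4 = 0 := by
    linear_combination h0 + Spi a * sq_add + Spi c * two_T
  have htau := congrArg tau hpi
  simp only [map_add, map_mul, map_pow, map_zero, tau_X0, tau_X1] at htau
  have hdvd : (X 1 : MvPolynomial (Fin 2) (ZMod 2)) ^ 2 ∣ tau (Spi b) * X 0 ^ 4 :=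
    ⟨-(tau (Spi a)), by linear_combination htau - tau (Spi a) * (2 * X 0 ^ 2 + 2 * X 0 * X 1) * two_T⟩
  have h4 : (X 1 : MvPolynomial (Fin 2) (ZMod 2)) ^ 2 ∣ tau (Spi b) :=
    prime_X1.pow_dvd_of_dvd_mul_right 2 not_X1_dvd hdvd
  obtain ⟨W, hW⟩ := h4
  have hb' : Spi b = (X 0 ^ 2 + X 1 ^ 2) * tau W := by
    have h5 := congrArg tau hW
    rw [tau_tau, map_mul, map_pow, tau_X1, sq_add] at h5
    exact h5
  obtain ⟨w, hw⟩ := MvPolynomial.map_surjective (Int.castRingHom (ZMod 2)) (fun x => ZMod.intCast_surjective x) (tau W)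
  have hker : Spi (b - (X 0 ^ 2 + X 1 ^ 2) * w) = 0 := by
    simp only [map_sub, map_mul, map_add, map_pow, map_X, hw, hb']
    ring
  obtain ⟨b₁, hb₁⟩ := ker_pi _ hker
  have key : (X 0 ^ 2 + X 1 ^ 2) * (a + w * X 0 ^ 4) = 2 * (c - b₁ * X 0 ^ 4) := by
    linear_combination hab - X 0 ^ 4 * hb₁
  have hker2 : Spi (a + w * X 0 ^ 4) = 0 := by
    have h5 := congrArg Spi key
    simp only [map_mul, map_add, map_pow, map_X, map_sub, map_ofNat] at h5
    have h6 : ((X 0 ^ 2 + X 1 ^ 2 : MvPolynomial (Fin 2) (ZMod 2))) * Spi (a + w * X 0 ^ 4) = 0 := by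
      rw [map_add, map_mul, map_pow, map_X]
      linear_combination h5 + (Spi c - Spi b₁ * X 0 ^ 4) * two_T
    rcases mul_eq_zero.mp h6 with h7 | h7
    · exfalso
      rw [← sq_add] at h7
      exact pow_ne_zero 2 X0_add_X1_ne h7
    · exact h7
  obtain ⟨a₁, ha₁⟩ := ker_pi _ hker2
  have h8 : (2 : MvPolynomial (Fin 2) ℤ) * (a₁ * (X 0 ^ 2 + X 1 ^ 2) + b₁ * X 0 ^ 4) = 2 * c := by
    linear_combination key - (X 0 ^ 2 + X 1 ^ 2) * ha₁
  have h2 : (2 : MvPolynomial (Fin 2) ℤ) ≠ 0 := by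
    intro h9
    have := congrArg constantCoeff h9
    rw [map_ofNat] at this
    exact two_ne_zero this
  exact ⟨a₁, b₁, mul_left_cancel₀ h2 h8⟩

noncomputable def e : MvPolynomial (Fin 4) ℤ ≃ₐ[ℤ] MvPolynomial (Fin 2) (MvPolynomial (Fin 2) ℤ) :=
  (renameEquiv ℤ (finSumFinEquiv (m := 2) (n := 2)).symm).trans (sumAlgEquiv ℤ (Fin 2) (Fin 2))

lemma e_X0 : e (X 0) = X 0 := by
  show sumAlgEquiv ℤ (Fin 2) (Fin 2) (rename _ (X 0)) = X 0
  rw [rename_X, show (finSumFinEquiv (m := 2) (n := 2)).symm 0 = Sum.inl 0 from rfl]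
  exact sumAlgEquiv_X_inl ℤ (Fin 2) (Fin 2) 0

lemma e_X1 : e (X 1) = X 1 := by
  show sumAlgEquiv ℤ (Fin 2) (Fin 2) (rename _ (X 1)) = X 1
  rw [rename_X, show (finSumFinEquiv (m := 2) (n := 2)).symm 1 = Sum.inl 1 from rfl]
  exact sumAlgEquiv_X_inl ℤ (Fin 2) (Fin 2) 1

lemma e_X2 : e (X 2) = C (X 0) := by
  show sumAlgEquiv ℤ (Fin 2) (Fin 2) (rename _ (X 2)) = C (X 0)
  rw [rename_X, show (finSumFinEquiv (m := 2) (n := 2)).symm 2 = Sum.inr 0 from rfl]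
  exact sumAlgEquiv_X_inr ℤ (Fin 2) (Fin 2) 0

lemma e_X3 : e (X 3) = C (X 1) := by
  show sumAlgEquiv ℤ (Fin 2) (Fin 2) (rename _ (X 3)) = C (X 1)
  rw [rename_X, show (finSumFinEquiv (m := 2) (n := 2)).symm 3 = Sum.inr 1 from rfl]
  exact sumAlgEquiv_X_inr ℤ (Fin 2) (Fin 2) 1

lemma es2 : e.symm (C (X 0)) = X 2 := by rw [← e_X2, AlgEquiv.symm_apply_apply]
lemma es3 : e.symm (C (X 1)) = X 3 := by rw [← e_X3, AlgEquiv.symm_apply_apply]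

lemma mapCJ : Ideal.map (C : MvPolynomial (Fin 2) ℤ →+* MvPolynomial (Fin 2) (MvPolynomial (Fin 2) ℤ))
    (Ideal.span {X 0 ^ 2 + X 1 ^ 2, X 0 ^ 4})
    = Ideal.span {C (X 0 ^ 2 + X 1 ^ 2), C (X 0 ^ 4)} := by
  rw [Ideal.map_span]
  congr 1
  rw [Set.image_insert_eq, Set.image_singleton]

lemma step (q : MvPolynomial (Fin 2) (MvPolynomial (Fin 2) ℤ))
    (h : C 2 * (X 0 * (X 1 * q)) ∈ Ideal.map (C : MvPolynomial (Fin 2) ℤ →+* _)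
      (Ideal.span {X 0 ^ 2 + X 1 ^ 2, X 0 ^ 4})) :
    q ∈ Ideal.map (C : MvPolynomial (Fin 2) ℤ →+* _)
      (Ideal.span {X 0 ^ 2 + X 1 ^ 2, X 0 ^ 4}) := by
  rw [mem_map_C_iff] at h ⊢
  intro m
  have h1 := h (Finsupp.single 0 1 + (Finsupp.single 1 1 + m))
  rw [coeff_C_mul, coeff_X_mul, coeff_X_mul] at h1
  exact lemA _ h1

end Sp2Aux

open Sp2Aux

/-- in `ℤ[y₁,y₂,g₁,g₂]`,
`⟨2y₁y₂g₁, 2y₁y₂g₂⟩ ∩ ⟨g₁²+g₂², g₁⁴⟩ = ⟨2y₁y₂(g₁²+g₂²), 2y₁y₂g₁⁴⟩`. -/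
theorem ideal_intersection_Sp2 :
    Ideal.span ({2 * (y₁ * y₂ * g₁), 2 * (y₁ * y₂ * g₂)} : Set (MvPolynomial (Fin 4) ℤ)) ⊓
      Ideal.span ({g₁ ^ 2 + g₂ ^ 2, g₁ ^ 4} : Set (MvPolynomial (Fin 4) ℤ))
    = Ideal.span ({2 * (y₁ * y₂ * (g₁ ^ 2 + g₂ ^ 2)), 2 * (y₁ * y₂ * g₁ ^ 4)} :
        Set (MvPolynomial (Fin 4) ℤ)) := by
  unfold y₁ y₂ g₁ g₂
  apply le_antisymm
  · intro p hp
    rw [Ideal.mem_inf] at hp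
    obtain ⟨hpI, hpJ⟩ := hp
    rw [Ideal.mem_span_pair] at hpI hpJ ⊢
    obtain ⟨f, g, hfg⟩ := hpI
    obtain ⟨a, b, hab⟩ := hpJ
    set q : MvPolynomial (Fin 4) ℤ := f * X 2 + g * X 3 with hqdef
    have hp2 : p = 2 * (X 0 * X 1) * q := by rw [hqdef]; linear_combination -hfg
    have hEp : e p ∈ Ideal.map (C : MvPolynomial (Fin 2) ℤ →+* _)
        (Ideal.span {X 0 ^ 2 + X 1 ^ 2, X 0 ^ 4}) := by
      rw [mapCJ, Ideal.mem_span_pair]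
      refine ⟨e a, e b, ?_⟩
      have h1 := congrArg e hab
      simp only [map_add, map_mul, map_pow, e_X2, e_X3] at h1
      simp only [map_add, map_pow]
      linear_combination h1
    have hEp2 : e p = C 2 * (X 0 * (X 1 * e q)) := by
      have h1 := congrArg e hp2
      simp only [map_add, map_mul, map_pow, map_ofNat, e_X0, e_X1] at h1
      rw [h1, show (C 2 : MvPolynomial (Fin 2) (MvPolynomial (Fin 2) ℤ)) = 2 from map_ofNat _ 2]
      ring
    rw [hEp2] at hEp
    have hq' := step (e q) hEp
    rw [mapCJ, Ideal.mem_span_pair] at hq'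
    obtain ⟨A, B, hAB⟩ := hq'
    simp only [map_add, map_pow] at hAB
    have h2 := congrArg e.symm hAB
    simp only [map_add, map_mul, map_pow, AlgEquiv.symm_apply_apply, es2, es3] at h2
    exact ⟨e.symm A, e.symm B, by linear_combination 2 * (X 0 * X 1 : MvPolynomial (Fin 4) ℤ) * h2 - hp2⟩
  · rw [Ideal.span_le]
    intro x hx
    simp only [Set.mem_insert_iff, Set.mem_singleton_iff] at hx
    rcases hx with rfl | rfl
    · rw [SetLike.mem_coe, Ideal.mem_inf]
      constructor
      · rw [Ideal.mem_span_pair]; exact ⟨X 2, X 3, by ring⟩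
      · rw [Ideal.mem_span_pair]; exact ⟨2 * (X 0 * X 1), 0, by ring⟩
    · rw [SetLike.mem_coe, Ideal.mem_inf]
      constructor
      · rw [Ideal.mem_span_pair]; exact ⟨X 2 ^ 3, 0, by ring⟩
      · rw [Ideal.mem_span_pair]; exact ⟨0, 2 * (X 0 * X 1), by ring⟩
end
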